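/- arXiv:1910.03134 — 5 statements merged into one kernel-verified Lean document; each statement's English description precedes it below -/
import Mathlib

section
/- Suppose X is a mean-zero random element of H^p whose covariance operator satisfies the partially separable expansion G = Σ_l Σ_l (φ_l ⊗ φ_l) with {φ_l} an orthonormal basis of H. Define the random vectors θ_l ∈ ℝ^p by (θ_l)_j = ⟨X_j, φ_l⟩. Then X = Σ_l θ_l φ_l almost surely in H^p, and the vectors θ_l are mutually uncorrelated: E[θ_l θ_{l'}ᵀ] = 0 for l ≠ l'. -/
open MeasureTheory RealInnerProductSpace

/-- Under the partially separable block expansion of the covariance operator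
of a mean-zero random element `X` of `H^p` (with `{φ_l}` an orthonormal basis of `H`),
the expansion `X = ∑_l θ_l φ_l` with `(θ_l)_j = ⟪X_j, φ_l⟫` holds almost surely in `H^p`,
and the vectors `θ_l` are mutually uncorrelated. -/
theorem stmt2 {H : Type*} [NormedAddCommGroup H] [InnerProductSpace ℝ H]
    [CompleteSpace H] (p : ℕ)
    {Ωs : Type*} [MeasurableSpace Ωs] (μ : Measure Ωs) [IsProbabilityMeasure μ]
    (X : Ωs → Fin p → H)
    (hmean : ∀ j, ∫ ω, X ω j ∂μ = 0)
    (hsec : Integrable (fun ω => ∑ j, ‖X ω j‖ ^ 2) μ)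
    (φ : ℕ → H) (hφ : Orthonormal ℝ φ)
    (hcomplete : (Submodule.span ℝ (Set.range φ)).topologicalClosure = ⊤)
    (M : ℕ → Matrix (Fin p) (Fin p) ℝ)
    (hblocks : ∀ (j k : Fin p) (g h : H),
      ∫ ω, ⟪X ω k, g⟫ * ⟪X ω j, h⟫ ∂μ = ∑' l, M l j k * (⟪φ l, g⟫ * ⟪φ l, h⟫)) :
    (∀ᵐ ω ∂μ, ∀ j, HasSum (fun l => ⟪X ω j, φ l⟫ • φ l) (X ω j)) ∧
    (∀ (l l' : ℕ), l ≠ l' → ∀ j k : Fin p,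
      ∫ ω, ⟪X ω j, φ l⟫ * ⟪X ω k, φ l'⟫ ∂μ = 0) := by
  constructor
  · refine Filter.Eventually.of_forall fun ω j => ?_
    let b : HilbertBasis ℕ ℝ H := HilbertBasis.mk hφ (le_of_eq hcomplete.symm)
    have hb : ⇑b = φ := HilbertBasis.coe_mk _ _
    have h := b.hasSum_repr (X ω j)
    simp only [HilbertBasis.repr_apply_apply] at h
    simp only [fun i => congrFun hb i] at h
    simp only [real_inner_comm] at h
    exact h
  · intro l l' hll' j k
    have h := hblocks k j (φ l) (φ l')
    rw [h]
    have hz : ∀ m, M m k j * (⟪φ m, φ l⟫ * ⟪φ m, φ l'⟫) = 0 := by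
      intro m
      have hml := orthonormal_iff_ite.mp hφ m l
      have hml' := orthonormal_iff_ite.mp hφ m l'
      rcases eq_or_ne m l with rfl | hne
      · simp [hml', hll']
      · simp [hml, hne]
    rw [show (fun m => M m k j * (⟪φ m, φ l⟫ * ⟪φ m, φ l'⟫)) = fun _ => 0 from funext hz]
    exact tsum_zero
end

section
/- Conversely, suppose X = Σ_l θ_l φ_l almost surely in H^p where {φ_l} is an orthonormal basis of H, θ_l are mean-zero random vectors in ℝ^p with covariance matrices Σ_l satisfying Σ_l tr(Σ_l) < ∞, and the θ_l are mutually uncorrelated. Then the covariance operator of X equals G = Σ_l Σ_l (φ_l ⊗ φ_l), and hence all eigenvectors of G are of the form e_{lj} φ_l where {e_{lj}}_{j=1}^p is an orthonormal eigenbasis of Σ_l. -/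
open MeasureTheory RealInnerProductSpace

/-!
Tested against `φ_l` in coordinate `j` and `φ_{l'}` in coordinate `k`, the defining identity of
`G` gives `⟪φ_{l'}, G(φ_l e_j)_k⟫ = E[θ_{lj} θ_{l'k}]`, because `⟪X_j, φ_l⟫ = θ_{lj}` almost
surely; by uncorrelatedness `G(φ_l e_j) = Σ_l(j, ·) φ_l`. Symmetry of the defining form then
gives `⟪φ_l, (G f)_j⟫ = (Σ_l ⟪φ_l, f⟫)_j`, the coefficients of the blockwise expansion of `G f`.
For `f = e φ_l` only the `l`-th term survives, and it is `Σ_l e φ_l = λ e φ_l`.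
-/

section InnerProductSpace

variable {𝕜 E ι : Type*} [RCLike 𝕜] [NormedAddCommGroup E] [InnerProductSpace 𝕜 E]

theorem sum_inner_single_right [Fintype ι] [DecidableEq ι] (u : ι → E) (k : ι) (x : E) :
    ∑ m, inner 𝕜 (u m) ((Pi.single k x : ι → E) m) = inner 𝕜 (u k) x := by
  rw [Finset.sum_eq_single k (fun m _ hm => by simp [Pi.single_eq_of_ne hm]) (by simp)]
  simp

theorem Orthonormal.inner_right_of_hasSum {v : ι → E} (hv : Orthonormal 𝕜 v) {c : ι → 𝕜}
    {x : E} (h : HasSum (fun i => c i • v i) x) (i : ι) : inner 𝕜 (v i) x = c i := by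
  classical
  have h' : HasSum (fun j => if j = i then c i else 0) (inner 𝕜 (v i) x) := by
    refine (h.mapL (innerSL 𝕜 (v i))).congr_fun fun j => ?_
    rw [innerSL_apply_apply, inner_smul_right, orthonormal_iff_ite.mp hv i j]
    split_ifs <;> simp_all
  exact h'.unique (hasSum_ite_eq i _)

theorem HilbertBasis.hasSum_inner_smul (b : HilbertBasis ι 𝕜 E) (x : E) :
    HasSum (fun i => inner 𝕜 (b i) x • b i) x := by
  simpa only [b.repr_apply_apply] using b.hasSum_repr x

theorem HilbertBasis.ext_inner (b : HilbertBasis ι 𝕜 E) {x y : E}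
    (h : ∀ i, inner 𝕜 (b i) x = inner 𝕜 (b i) y) : x = y :=
  (b.hasSum_inner_smul x).unique (by simpa only [h] using b.hasSum_inner_smul y)

end InnerProductSpace

section Covariance

variable {H Ω ι κ : Type*} [NormedAddCommGroup H] [InnerProductSpace ℝ H] [MeasurableSpace Ω]
  [Fintype ι]

/-- The second-moment form of `X` on `H^ι`, which is its covariance when `X` is centred. -/
def IsCovarianceOperator (μ : Measure Ω) (X : Ω → ι → H) (G : (ι → H) →ₗ[ℝ] (ι → H)) :
    Prop :=
  ∀ f g : ι → H, ∑ j, ⟪G f j, g j⟫ = ∫ ω, (∑ j, ⟪X ω j, f j⟫) * (∑ j, ⟪X ω j, g j⟫) ∂μ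

namespace IsCovarianceOperator

variable {μ : Measure Ω} {X : Ω → ι → H} {G : (ι → H) →ₗ[ℝ] (ι → H)}

theorem sum_inner_comm (hG : IsCovarianceOperator μ X G) (f g : ι → H) :
    ∑ j, ⟪G f j, g j⟫ = ∑ j, ⟪G g j, f j⟫ := by
  rw [hG, hG]
  exact integral_congr_ae (.of_forall fun ω => mul_comm _ _)

variable [DecidableEq ι]

theorem inner_apply_single (hG : IsCovarianceOperator μ X G) (j k : ι) (x y : H) :
    ⟪G (Pi.single j x) k, y⟫ = ∫ ω, ⟪X ω j, x⟫ * ⟪X ω k, y⟫ ∂μ := by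
  simpa only [sum_inner_single_right] using hG (Pi.single j x) (Pi.single k y)

theorem inner_apply_eq_sum (hG : IsCovarianceOperator μ X G) (f : ι → H) (j : ι) (y : H) :
    ⟪y, G f j⟫ = ∑ k, ⟪G (Pi.single j y) k, f k⟫ := by
  rw [← hG.sum_inner_comm, sum_inner_single_right, real_inner_comm]

theorem apply_single_basis [DecidableEq κ] (hG : IsCovarianceOperator μ X G)
    (b : HilbertBasis κ ℝ H) {θ : κ → Ω → ι → ℝ} {M : κ → Matrix ι ι ℝ}
    (hX : ∀ᵐ ω ∂μ, ∀ j, HasSum (fun l => θ l ω j • b l) (X ω j))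
    (hcov : ∀ l j k, ∫ ω, θ l ω j * θ l ω k ∂μ = M l j k)
    (huncorr : ∀ l l', l ≠ l' → ∀ j k, ∫ ω, θ l ω j * θ l' ω k ∂μ = 0) (l : κ) (j k : ι) :
    G (Pi.single j (b l)) k = M l j k • b l := by
  have hθ : ∀ᵐ ω ∂μ, ∀ l j, ⟪X ω j, b l⟫ = θ l ω j := by
    filter_upwards [hX] with ω hω l j
    rw [real_inner_comm]
    exact b.orthonormal.inner_right_of_hasSum (hω j) l
  refine b.ext_inner fun l' => ?_
  rw [real_inner_comm, hG.inner_apply_single,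
    integral_congr_ae (hθ.mono fun ω h => by rw [h, h]), real_inner_smul_right,
    orthonormal_iff_ite.mp b.orthonormal]
  by_cases hl : l = l'
  · subst hl
    simp [hcov]
  · simp [Ne.symm hl, huncorr l l' hl]

theorem inner_basis_apply (hG : IsCovarianceOperator μ X G) (b : HilbertBasis κ ℝ H)
    {M : κ → Matrix ι ι ℝ} (hsingle : ∀ l j k, G (Pi.single j (b l)) k = M l j k • b l)
    (f : ι → H) (l : κ) (j : ι) :
    ⟪b l, G f j⟫ = (M l).mulVec (fun k => ⟪b l, f k⟫) j := by
  simp only [hG.inner_apply_eq_sum, hsingle, real_inner_smul_left]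
  rfl

end IsCovarianceOperator

end Covariance

theorem HilbertBasis.apply_smul_of_mulVec_eq {H ι κ : Type*} [NormedAddCommGroup H]
    [InnerProductSpace ℝ H] [Fintype ι] (b : HilbertBasis κ ℝ H) {M : κ → Matrix ι ι ℝ}
    {G : (ι → H) → ι → H}
    (hG : ∀ f, HasSum (fun l => fun j => (M l).mulVec (fun k => ⟪b l, f k⟫) j • b l) (G f))
    {l : κ} {e : ι → ℝ} {lam : ℝ} (hev : (M l).mulVec e = lam • e) :
    G (fun j => e j • b l) = fun j => lam • (e j • b l) := by
  refine (hG _).unique ?_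
  convert hasSum_single l fun l' hl' => ?_ using 1
  · funext j
    simp [real_inner_smul_right, b.orthonormal.1 l, hev, smul_smul]
  · funext j
    simp [real_inner_smul_right, b.orthonormal.2 hl', ← Pi.zero_def]

theorem stmt3_general {H : Type*} [NormedAddCommGroup H] [InnerProductSpace ℝ H]
    [CompleteSpace H] (p : ℕ)
    {Ωs : Type*} [MeasurableSpace Ωs] (μ : Measure Ωs)
    (X : Ωs → Fin p → H) (θ : ℕ → Ωs → Fin p → ℝ)
    (φ : ℕ → H) (hφ : Orthonormal ℝ φ)
    (hcomplete : (Submodule.span ℝ (Set.range φ)).topologicalClosure = ⊤)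
    (M : ℕ → Matrix (Fin p) (Fin p) ℝ)
    (hcovθ : ∀ l j k, ∫ ω, θ l ω j * θ l ω k ∂μ = M l j k)
    (huncorr : ∀ l l', l ≠ l' → ∀ j k, ∫ ω, θ l ω j * θ l' ω k ∂μ = 0)
    (hX : ∀ᵐ ω ∂μ, ∀ j, HasSum (fun l => θ l ω j • φ l) (X ω j))
    (G : (Fin p → H) →ₗ[ℝ] (Fin p → H))
    (hG : ∀ f g : Fin p → H,
      ∑ j, ⟪G f j, g j⟫ = ∫ ω, (∑ j, ⟪X ω j, f j⟫) * (∑ j, ⟪X ω j, g j⟫) ∂μ) :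
    (∀ f : Fin p → H,
      HasSum (fun l => fun j => ((M l).mulVec (fun k => ⟪φ l, f k⟫) j) • φ l) (G f)) ∧
    (∀ (l : ℕ) (e : Fin p → ℝ) (lam : ℝ), (M l).mulVec e = lam • e →
      G (fun j => e j • φ l) = fun j => lam • (e j • φ l)) := by
  obtain ⟨b, rfl⟩ : ∃ b : HilbertBasis ℕ ℝ H, ⇑b = φ :=
    ⟨_, HilbertBasis.coe_mk hφ hcomplete.ge⟩
  have hG : IsCovarianceOperator μ X G := hG
  have hsingle := hG.apply_single_basis b hX hcovθ huncorr
  have hexpand (f : Fin p → H) :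
      HasSum (fun l => fun j => ((M l).mulVec (fun k => ⟪b l, f k⟫) j) • b l) (G f) :=
    Pi.hasSum.2 fun j => by
      simpa only [hG.inner_basis_apply b hsingle] using b.hasSum_inner_smul (G f j)
  exact ⟨hexpand, fun l e lam hev => b.apply_smul_of_mulVec_eq hexpand hev⟩

/-- Conversely, if `X = ∑_l θ_l φ_l` almost surely with `{φ_l}` an orthonormal
basis of `H`, the `θ_l` mean-zero random vectors with covariance matrices `Σ_l`,
`∑_l tr(Σ_l) < ∞`, and the `θ_l` mutually uncorrelated, then the covariance operator `G` of
`X` equals `∑_l Σ_l (φ_l ⊗ φ_l)`, and hence elements `e_{lj} φ_l` built from eigenvectors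
of `Σ_l` are eigenvectors of `G`. -/
theorem stmt3 {H : Type*} [NormedAddCommGroup H] [InnerProductSpace ℝ H]
    [CompleteSpace H] (p : ℕ)
    {Ωs : Type*} [MeasurableSpace Ωs] (μ : Measure Ωs) [IsProbabilityMeasure μ]
    (X : Ωs → Fin p → H) (θ : ℕ → Ωs → Fin p → ℝ)
    (φ : ℕ → H) (hφ : Orthonormal ℝ φ)
    (hcomplete : (Submodule.span ℝ (Set.range φ)).topologicalClosure = ⊤)
    (M : ℕ → Matrix (Fin p) (Fin p) ℝ)
    (hmeanθ : ∀ l j, ∫ ω, θ l ω j ∂μ = 0)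
    (hcovθ : ∀ l j k, ∫ ω, θ l ω j * θ l ω k ∂μ = M l j k)
    (htr : Summable fun l => (M l).trace)
    (huncorr : ∀ l l', l ≠ l' → ∀ j k, ∫ ω, θ l ω j * θ l' ω k ∂μ = 0)
    (hX : ∀ᵐ ω ∂μ, ∀ j, HasSum (fun l => θ l ω j • φ l) (X ω j))
    (G : (Fin p → H) →ₗ[ℝ] (Fin p → H))
    (hG : ∀ f g : Fin p → H,
      ∑ j, ⟪G f j, g j⟫ = ∫ ω, (∑ j, ⟪X ω j, f j⟫) * (∑ j, ⟪X ω j, g j⟫) ∂μ) :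
    (∀ f : Fin p → H,
      HasSum (fun l => fun j => ((M l).mulVec (fun k => ⟪φ l, f k⟫) j) • φ l) (G f)) ∧
    (∀ (l : ℕ) (e : Fin p → ℝ) (lam : ℝ), (M l).mulVec e = lam • e →
      G (fun j => e j • φ l) = fun j => lam • (e j • φ l)) :=
  stmt3_general p μ X θ φ hφ hcomplete M hcovθ huncorr hX G hG
end

section
/- If the covariance operator G of X admits the partially separable expansion G = Σ_l Σ_l (φ_l ⊗ φ_l) with tr(Σ_l) nonincreasing in l, then the averaged operator H̄ = p^{-1}Σ_{j=1}^p G_jj has spectral decomposition H̄ = Σ_l λ_l φ_l ⊗ φ_l with eigenvalues λ_l = p^{-1} tr(Σ_l). In particular, {φ_l} is an orthonormal eigenbasis of H̄. -/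
open RealInnerProductSpace

/-- If the covariance operator admits the partially separable expansion
(`G_jj = ∑_l (Σ_l)_{jj} φ_l ⊗ φ_l` with `tr(Σ_l)` nonincreasing), then
`H̄ = p⁻¹ ∑_j G_jj` has spectral decomposition `H̄ = ∑_l λ_l φ_l ⊗ φ_l` with
`λ_l = p⁻¹ tr(Σ_l)`; in particular `{φ_l}` is an orthonormal eigenbasis of `H̄`. -/
theorem stmt7 {H : Type*} [NormedAddCommGroup H] [InnerProductSpace ℝ H]
    [CompleteSpace H] (p : ℕ) (hp : 0 < p)
    (φ : ℕ → H) (hφ : Orthonormal ℝ φ)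
    (M : ℕ → Matrix (Fin p) (Fin p) ℝ)
    (hMpsd : ∀ l, (M l).PosSemidef)
    (hanti : Antitone fun l => (M l).trace)
    (Gjj : Fin p → H →L[ℝ] H)
    (hGjj : ∀ (j : Fin p) (g : H),
      HasSum (fun l => (M l j j * ⟪φ l, g⟫) • φ l) (Gjj j g))
    (Hbar : H →L[ℝ] H) (hHbar : ∀ g, Hbar g = (p : ℝ)⁻¹ • ∑ j, Gjj j g) :
    (∀ g : H,
      HasSum (fun l => ((p : ℝ)⁻¹ * (M l).trace * ⟪φ l, g⟫) • φ l) (Hbar g)) ∧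
    (∀ l, Hbar (φ l) = ((p : ℝ)⁻¹ * (M l).trace) • φ l) := by
  have main : ∀ g : H,
      HasSum (fun l => ((p : ℝ)⁻¹ * (M l).trace * ⟪φ l, g⟫) • φ l) (Hbar g) := by
    intro g
    have h1 : HasSum (fun l => ∑ j : Fin p, (M l j j * ⟪φ l, g⟫) • φ l)
        (∑ j : Fin p, Gjj j g) := hasSum_sum fun j _ => hGjj j g
    have h2 := h1.const_smul ((p : ℝ)⁻¹)
    rw [hHbar]
    convert h2 using 2 with l
    rw [Finset.smul_sum]
    simp only [smul_smul]
    rw [← Finset.sum_smul]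
    congr 1
    simp only [Matrix.trace, Matrix.diag, Finset.mul_sum, Finset.sum_mul]
    exact Finset.sum_congr rfl fun j _ => by ring
  refine ⟨main, fun l => ?_⟩
  have h := main (φ l)
  have h' : HasSum (fun k => ((p : ℝ)⁻¹ * (M k).trace * ⟪φ k, φ l⟫) • φ k)
      (((p : ℝ)⁻¹ * (M l).trace) • φ l) := by
    have : (fun k => ((p : ℝ)⁻¹ * (M k).trace * ⟪φ k, φ l⟫) • φ k)
        = fun k => if k = l then ((p : ℝ)⁻¹ * (M l).trace) • φ l else 0 := by
      funext k
      by_cases hk : k = l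
      · subst hk
        have hn : ⟪φ k, φ k⟫ = 1 := by
          rw [real_inner_self_eq_norm_mul_norm, hφ.1 k, mul_one]
        rw [if_pos rfl, hn, mul_one]
      · rw [if_neg hk]
        have : ⟪φ k, φ l⟫ = 0 := hφ.2 hk
        simp [this]
    rw [this]
    exact hasSum_ite_eq l _
  exact h.unique h'
end

section
/- Under the setting of the previous statement (Gaussian X with partially separable covariance), define edge sets E and E_l on vertex set V = {1,…,p} by: (j,k) ∉ E iff the conditional covariance kernel C_jk ≡ 0, and (j,k) ∉ E_l iff (Σ_l^{-1})_{jk} = 0. Then E = ⋃_{l=1}^∞ E_l. -/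
/-!
The coefficients of an orthonormal expansion are recovered by inner products, so the series
`∑ σ̃_{ljk} φ_l` vanishes iff every `σ̃_{ljk}` does. Its denominator `ω_{ljj} ω_{lkk} - ω_{ljk}²` is
a `2 × 2` principal minor of the positive definite `Ω_l`, hence positive, so `σ̃_{ljk} = 0` iff
`ω_{ljk} = 0`.
-/

open scoped InnerProductSpace

theorem Matrix.PosDef.mul_diag_sub_sq_pos {n : Type*} [Fintype n] [DecidableEq n]
    {A : Matrix n n ℝ} (hA : A.PosDef) {j k : n} (hjk : j ≠ k) :
    0 < A j j * A k k - A j k ^ 2 := by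
  have hinj : Function.Injective ![j, k] := by
    intro a b
    fin_cases a <;> fin_cases b <;> simp [hjk, hjk.symm]
  have hdet := (hA.submatrix hinj).det_pos
  have hsymm : A k j = A j k := hA.isHermitian.apply j k
  rw [Matrix.det_fin_two] at hdet
  simpa [hsymm, sq] using hdet

theorem Orthonormal.inner_tsum_smul {𝕜 E ι : Type*} [RCLike 𝕜] [NormedAddCommGroup E]
    [InnerProductSpace 𝕜 E] {v : ι → E} (hv : Orthonormal 𝕜 v) {c : ι → 𝕜}
    (hc : Summable fun i => c i • v i) (i : ι) :
    ⟪v i, ∑' m, c m • v m⟫_𝕜 = c i := by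
  classical
  rw [← innerSL_apply_apply 𝕜, (innerSL 𝕜 (v i)).map_tsum hc]
  convert tsum_ite_eq i c using 2 with m
  simp [orthonormal_iff_ite.mp hv, eq_comm]

theorem Orthonormal.tsum_smul_eq_zero_iff {𝕜 E ι : Type*} [RCLike 𝕜] [NormedAddCommGroup E]
    [InnerProductSpace 𝕜 E] {v : ι → E} (hv : Orthonormal 𝕜 v) {c : ι → 𝕜}
    (hc : Summable fun i => c i • v i) :
    ∑' i, c i • v i = 0 ↔ ∀ i, c i = 0 := by
  refine ⟨fun h i => ?_, fun h => by simp [h]⟩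
  rw [← hv.inner_tsum_smul hc i, h, inner_zero_right]

theorem stmt11_general (p : ℕ) {K : Type*} [NormedAddCommGroup K] [InnerProductSpace ℝ K]
    (Φ : ℕ → K) (hΦ : Orthonormal ℝ Φ)
    (M : ℕ → Matrix (Fin p) (Fin p) ℝ) (hM : ∀ l, (M l).PosDef)
    (σt : ℕ → Fin p → Fin p → ℝ)
    (hσt : ∀ l j k, σt l j k =
      -((M l)⁻¹ j k) / ((M l)⁻¹ j j * (M l)⁻¹ k k - ((M l)⁻¹ j k) ^ 2))
    (hsum : ∀ j k : Fin p, Summable fun l => σt l j k • Φ l) :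
    ∀ j k : Fin p, j ≠ k →
      ((∑' l, σt l j k • Φ l) ≠ 0 ↔ ∃ l, (M l)⁻¹ j k ≠ 0) := by
  intro j k hjk
  rw [Ne, hΦ.tsum_smul_eq_zero_iff (hsum j k), not_forall]
  refine exists_congr fun l => ?_
  have hminor := ((hM l).inv.mul_diag_sub_sq_pos hjk).ne'
  rw [hσt, ← Ne, div_ne_zero_iff, neg_ne_zero]
  exact and_iff_left hminor

/-- Under the partially separable Gaussian setting, with
`C_jk = ∑_l σ̃_{ljk} φ_l ⊗ φ_l` (here `Φ l` represents the orthonormal kernel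
`φ_l ⊗ φ_l` and `σ̃_{ljk} = −ω_{ljk}/(ω_{ljj}ω_{lkk} − ω_{ljk}²)`, `Ω_l = Σ_l⁻¹`),
the edge sets `E` (`(j,k) ∈ E ↔ C_jk ≢ 0`) and `E_l` (`(j,k) ∈ E_l ↔ (Σ_l⁻¹)_{jk} ≠ 0`)
satisfy `E = ⋃_l E_l`. -/
theorem stmt11 (p : ℕ) {K : Type*} [NormedAddCommGroup K] [InnerProductSpace ℝ K]
    [CompleteSpace K]
    (Φ : ℕ → K) (hΦ : Orthonormal ℝ Φ)
    (M : ℕ → Matrix (Fin p) (Fin p) ℝ) (hM : ∀ l, (M l).PosDef)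
    (σt : ℕ → Fin p → Fin p → ℝ)
    (hσt : ∀ l j k, σt l j k =
      -((M l)⁻¹ j k) / ((M l)⁻¹ j j * (M l)⁻¹ k k - ((M l)⁻¹ j k) ^ 2))
    (hsum : ∀ j k : Fin p, Summable fun l => σt l j k • Φ l) :
    ∀ j k : Fin p, j ≠ k →
      ((∑' l, σt l j k • Φ l) ≠ 0 ↔ ∃ l, (M l)⁻¹ j k ≠ 0) :=
  stmt11_general p Φ hΦ M hM σt hσt hsum
end

section
/- Let X_j = Σ_l θ_{lj} φ_l with {φ_l} an orthonormal basis of L²[0,1], and suppose: (i) for all j,k,l, cov(θ_{lj}, θ_{lk} | X_{−(j,k)}) = cov(θ_{lj}, θ_{lk} | θ_{l,−(j,k)}); and (ii) if (j,k) ∉ E_l and (j,k) ∉ E_{l'} then cov(θ_{lj}, θ_{l'k} | X_{−(j,k)}) = 0, where (j,k) ∉ E_l means cov(θ_{lj}, θ_{lk} | θ_{l,−(j,k)}) = 0. Define (j,k) ∉ E iff cov(X_j(s), X_k(t) | X_{−(j,k)}) ≡ 0. Then E = ⋃_{l=1}^∞ E_l. -/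
/-- Markov-type sufficient conditions: Fix components `j ≠ k`. Let
`cc (l,l')` denote the conditional covariance `cov(θ_{lj}, θ_{l'k} | X_{−(j,k)})` and
`d l` the partial covariance `cov(θ_{lj}, θ_{lk} | θ_{l,−(j,k)})`. Assume
(i) `cc (l,l) = d l` for all `l`, and (ii) if `d l = 0` and `d l' = 0` then
`cc (l,l') = 0` for `l ≠ l'`. The conditional covariance kernel is
`C = ∑_{l,l'} cc (l,l') φ_l ⊗ φ_{l'}` with `{φ_l ⊗ φ_{l'}}` orthonormal (represented by
the orthonormal family `Φ : ℕ × ℕ → K`). Then `(j,k) ∉ E` (i.e. `C = 0`) iff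
`(j,k) ∉ E_l` for every `l` (i.e. `d l = 0` for all `l`); that is, `E = ⋃_l E_l`. -/
theorem stmt12 {K : Type*} [NormedAddCommGroup K] [InnerProductSpace ℝ K]
    [CompleteSpace K]
    (Φ : ℕ × ℕ → K) (hΦ : Orthonormal ℝ Φ)
    (cc : ℕ × ℕ → ℝ) (d : ℕ → ℝ)
    (h1 : ∀ l, cc (l, l) = d l)
    (h2 : ∀ l l', l ≠ l' → d l = 0 → d l' = 0 → cc (l, l') = 0)
    (hsum : Summable fun q => cc q • Φ q) :
    (∑' q, cc q • Φ q) = 0 ↔ ∀ l, d l = 0 := by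
  constructor
  · intro h l
    have hs : HasSum (fun q => (innerSL ℝ (Φ (l, l))) (cc q • Φ q))
        ((innerSL ℝ (Φ (l, l))) (∑' q, cc q • Φ q)) :=
      (innerSL ℝ (Φ (l, l))).hasSum hsum.hasSum
    have heq : (fun q => (innerSL ℝ (Φ (l, l))) (cc q • Φ q)) =
        fun q => if q = (l, l) then cc (l, l) else 0 := by
      funext q
      simp only [innerSL_apply_apply, real_inner_smul_right, orthonormal_iff_ite.mp hΦ]
      rcases eq_or_ne q (l, l) with hq | hq
      · subst hq; simp
      · simp [hq, Ne.symm hq]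
    rw [heq] at hs
    have hs0 : HasSum (fun q => if q = (l, l) then cc (l, l) else 0) (cc (l, l)) := by
      convert hasSum_ite_eq ((l, l) : ℕ × ℕ) (cc (l, l)) using 1
    have := hs.unique hs0
    rw [h] at this
    simp at this
    rw [← h1 l, ← this]
  · intro hd
    have : ∀ q, cc q • Φ q = 0 := by
      rintro ⟨l, l'⟩
      rcases eq_or_ne l l' with rfl | hne
      · rw [h1 l, hd l]; simp
      · rw [h2 l l' hne (hd l) (hd l')]; simp
    simp [this]
end
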